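/- If G is a 1-extendable graph with a vertex v adjacent to all other vertices, then G is a complete graph. -/

import Mathlib

open scoped Classical

variable {V : Type*}

/-- `S` is an independent set of the graph `G`. -/
def IndepF (G : SimpleGraph V) (S : Finset V) : Prop :=
  ∀ u ∈ S, ∀ v ∈ S, ¬ G.Adj u v

/-- The independence number of `G`. -/
noncomputable def alphaN [Fintype V] (G : SimpleGraph V) : ℕ :=
  Finset.univ.powerset.sup fun S => if IndepF G S then S.card else 0

/-- `G` is 1-extendable: every vertex belongs to a maximum independent set. -/
def OneExt [Fintype V] (G : SimpleGraph V) : Prop :=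
  ∀ v : V, ∃ S : Finset V, v ∈ S ∧ IndepF G S ∧ S.card = alphaN G

/-- The 1-extendable chromatic number of `G`. -/
noncomputable def chiOneExt [Fintype V] (G : SimpleGraph V) : ℕ :=
  sInf {k | ∃ c : V → Fin k, ∀ i : Fin k, OneExt (G.induce {v | c v = i})}

/-- The join (complete sum) of two graphs. -/
def gJoin {α β : Type*} (G : SimpleGraph α) (H : SimpleGraph β) : SimpleGraph (α ⊕ β) where
  Adj u v := match u, v with
    | Sum.inl u, Sum.inl v => G.Adj u v
    | Sum.inr u, Sum.inr v => H.Adj u v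
    | Sum.inl _, Sum.inr _ => True
    | Sum.inr _, Sum.inl _ => True
  symm := ⟨by rintro (u|u) (v|v) h <;> simp_all [SimpleGraph.adj_comm]⟩
  loopless := ⟨by rintro (u|u) h <;> simp_all⟩

theorem IndepF.card_le_alphaN [Fintype V] {G : SimpleGraph V} {S : Finset V} (hS : IndepF G S) :
    S.card ≤ alphaN G := by
  have := Finset.le_sup (f := fun S => if IndepF G S then S.card else 0)
    (Finset.mem_powerset.2 (Finset.subset_univ S))
  simpa [hS, alphaN] using this

theorem indepF_pair {G : SimpleGraph V} {u w : V} (h : ¬ G.Adj u w) : IndepF G {u, w} := by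
  simp only [IndepF, Finset.mem_insert, Finset.mem_singleton]
  rintro a (rfl | rfl) b (rfl | rfl) <;> simp_all [SimpleGraph.adj_comm]

theorem adj_of_alphaN_le_one [Fintype V] {G : SimpleGraph V} (hα : alphaN G ≤ 1) {u w : V}
    (huw : u ≠ w) : G.Adj u w := by
  by_contra h
  have := (indepF_pair h).card_le_alphaN
  rw [Finset.card_pair huw] at this
  omega

theorem IndepF.eq_singleton_of_forall_adj {G : SimpleGraph V} {S : Finset V} (hS : IndepF G S)
    {v : V} (hvS : v ∈ S) (hv : ∀ u : V, u ≠ v → G.Adj v u) : S = {v} :=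
  Finset.eq_singleton_iff_unique_mem.2
    ⟨hvS, fun u hu => by_contra fun huv => hS v hvS u hu (hv u huv)⟩

/-- A 1-extendable graph with a universal vertex is complete. -/
theorem oneExt_universal_vertex_complete [Fintype V] (G : SimpleGraph V)
    (hG : OneExt G) (v : V) (hv : ∀ u : V, u ≠ v → G.Adj v u) :
    ∀ u w : V, u ≠ w → G.Adj u w := by
  obtain ⟨S, hvS, hSi, hScard⟩ := hG v
  have hα : alphaN G = 1 := by
    rw [← hScard, hSi.eq_singleton_of_forall_adj hvS hv, Finset.card_singleton]
  exact fun u w huw => adj_of_alphaN_le_one hα.le huw
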